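/- arXiv:2411.05220 — 3 statements merged into one kernel-verified Lean document; each statement's English description precedes it below -/
import Mathlib

section
/- Conversely to the previous statement: if q ≥ 0 satisfies A q = β(P) (with A and β(P) as defined), then the probability measure Q on response types defined by Q{R = r} = q(r), coupled with Z drawn independently with the marginal of Z under P, satisfies: Q is a probability measure, Q{R ∈ 𝓡} = 1, P = QT⁻¹, and E_Q[(g(R) − θ₀) 1{R ∈ R'}] = 0. -/
/-!
Summing the `(y, d, z)` rows of `Ax = β(P)` over `(y, d)` shows that, for every `z`, the total
mass of `x` is `P{Z = z} / P{Z = z} = 1`. Since `Q` is the product of `x` with the law of `Z`,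
every `Q`-probability of an event depending on `R` alone is the corresponding `x`-sum, and the
observable law of `(Y, D, Z) = T(R, Z)` is the `(y, d, z)` row of `Ax` times `P{Z = z}`.
-/

theorem Fintype.sum_prod_prod_eq_sum_sum_sum {α β γ M : Type*} [Fintype α] [Fintype β]
    [Fintype γ] [AddCommMonoid M] (p : α × β × γ → M) :
    ∑ m, p m = ∑ c, ∑ a, ∑ b, p (a, b, c) := by
  rw [Fintype.sum_prod_type_right, Fintype.sum_prod_type_right]
  exact Finset.sum_congr rfl fun _ _ => Finset.sum_comm

theorem Fintype.sum_sum_ite_apply_eq_and_eq {α β M : Type*} [Fintype α] [Fintype β]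
    [DecidableEq α] [DecidableEq β] [AddCommMonoid M] (f : α → β) (a : α) (c : M) :
    ∑ b, ∑ a', (if f a' = b ∧ a = a' then c else 0) = c := by
  rw [Finset.sum_comm]
  simp [ite_and]

section ResponseTypes

variable {𝒴 𝒟 𝒵 : Type*} [Fintype 𝒴] [Fintype 𝒟] [Fintype 𝒵] [DecidableEq 𝒴] [DecidableEq 𝒟]
    [DecidableEq 𝒵]

theorem sum_eq_one_of_sum_ite_response_eq_div (p : 𝒴 × 𝒟 × 𝒵 → ℝ)
    (x : (𝒟 → 𝒴) × (𝒵 → 𝒟) → ℝ) (z : 𝒵) (hz : ∑ y, ∑ d, p (y, d, z) ≠ 0)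
    (hobs : ∀ y d, (∑ r : (𝒟 → 𝒴) × (𝒵 → 𝒟), if r.1 d = y ∧ r.2 z = d then x r else 0)
      = p (y, d, z) / ∑ y', ∑ d', p (y', d', z)) :
    ∑ r, x r = 1 := calc
  ∑ r, x r = ∑ r : (𝒟 → 𝒴) × (𝒵 → 𝒟), ∑ y, ∑ d, if r.1 d = y ∧ r.2 z = d then x r else 0 :=
    Finset.sum_congr rfl fun r _ => (Fintype.sum_sum_ite_apply_eq_and_eq r.1 (r.2 z) _).symm
  _ = ∑ y, ∑ d, ∑ r : (𝒟 → 𝒴) × (𝒵 → 𝒟), if r.1 d = y ∧ r.2 z = d then x r else 0 := by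
    rw [Finset.sum_comm]
    exact Finset.sum_congr rfl fun _ _ => Finset.sum_comm
  _ = 1 := by simp only [hobs, ← Finset.sum_div, div_self hz]

theorem sum_ite_response_apply_eq_and_eq_mul (x : (𝒟 → 𝒴) × (𝒵 → 𝒟) → ℝ) (s : ℝ)
    (y : 𝒴) (d : 𝒟) (z : 𝒵) :
    (∑ r : (𝒟 → 𝒴) × (𝒵 → 𝒟), if r.1 (r.2 z) = y ∧ r.2 z = d then x r * s else 0)
      = (∑ r : (𝒟 → 𝒴) × (𝒵 → 𝒟), if r.1 d = y ∧ r.2 z = d then x r else 0) * s := by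
  rw [Finset.sum_mul]
  refine Finset.sum_congr rfl fun r _ => ?_
  by_cases hd : r.2 z = d
  · simp [hd, ite_mul]
  · simp [hd]

end ResponseTypes

theorem lemma1_converse_general
    {𝒴 𝒟 𝒵 : Type*} [Fintype 𝒴] [Fintype 𝒟] [Fintype 𝒵]
    [DecidableEq 𝒴] [DecidableEq 𝒟] [DecidableEq 𝒵]
    (p : 𝒴 × 𝒟 × 𝒵 → ℝ) (hpsum : ∑ m, p m = 1)
    (hz : ∀ z : 𝒵, 0 < ∑ y, ∑ d, p (y, d, z))
    (𝓡 R' : Finset ((𝒟 → 𝒴) × (𝒵 → 𝒟)))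
    (g : ((𝒟 → 𝒴) × (𝒵 → 𝒟)) → ℝ) (θ₀ : ℝ)
    (x : ((𝒟 → 𝒴) × (𝒵 → 𝒟)) → ℝ)
    -- the (y,d,z) rows of Ax = β(P)
    (hobs : ∀ (y : 𝒴) (d : 𝒟) (z : 𝒵),
      (∑ r : (𝒟 → 𝒴) × (𝒵 → 𝒟), if r.1 d = y ∧ r.2 z = d then x r else 0)
        = p (y, d, z) / (∑ y', ∑ d', p (y', d', z)))
    -- the 1{r ∈ 𝓡} row of Ax = β(P)
    (h𝓡 : (∑ r : (𝒟 → 𝒴) × (𝒵 → 𝒟), if r ∈ 𝓡 then x r else 0) = 1)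
    -- the (g(r) − θ₀)1{r ∈ R'} row of Ax = β(P)
    (hmom : (∑ r : (𝒟 → 𝒴) × (𝒵 → 𝒟), if r ∈ R' then (g r - θ₀) * x r else 0) = 0) :
    -- Q defined by q(r, z) = x(r) · P{Z = z} is a probability measure
    (∑ ω : ((𝒟 → 𝒴) × (𝒵 → 𝒟)) × 𝒵, x ω.1 * (∑ y, ∑ d, p (y, d, ω.2))) = 1 ∧
    -- Q{R ∈ 𝓡} = 1
    (∑ r : (𝒟 → 𝒴) × (𝒵 → 𝒟),
        if r ∈ 𝓡 then (∑ z, x r * (∑ y, ∑ d, p (y, d, z))) else 0) = 1 ∧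
    -- P = QT⁻¹
    (∀ (y : 𝒴) (d : 𝒟) (z : 𝒵),
      (∑ r : (𝒟 → 𝒴) × (𝒵 → 𝒟),
          if r.1 (r.2 z) = y ∧ r.2 z = d
          then x r * (∑ y', ∑ d', p (y', d', z)) else 0) = p (y, d, z)) ∧
    -- E_Q[(g(R) − θ₀) 1{R ∈ R'}] = 0
    (∑ r : (𝒟 → 𝒴) × (𝒵 → 𝒟),
        if r ∈ R' then (g r - θ₀) * (∑ z, x r * (∑ y, ∑ d, p (y, d, z))) else 0)
      = 0 := by
  have hS : ∑ z, ∑ y, ∑ d, p (y, d, z) = 1 :=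
    (Fintype.sum_prod_prod_eq_sum_sum_sum p).symm.trans hpsum
  have hx1 : ∀ z, ∑ r, x r = 1 := fun z =>
    sum_eq_one_of_sum_ite_response_eq_div p x z (hz z).ne' (hobs · · z)
  have hmarg : ∀ r, ∑ z, x r * ∑ y, ∑ d, p (y, d, z) = x r := fun r => by
    rw [← Finset.mul_sum, hS, mul_one]
  refine ⟨?_, by simpa only [hmarg] using h𝓡, fun y d z => ?_, by simpa only [hmarg] using hmom⟩
  · rw [Fintype.sum_prod_type_right]
    refine (Finset.sum_congr rfl fun z _ => ?_).trans hS
    dsimp only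
    rw [← Finset.sum_mul, hx1 z, one_mul]
  · rw [sum_ite_response_apply_eq_and_eq_mul, hobs, div_mul_cancel₀ _ (hz z).ne']

/-- Converse direction of Lemma 1: if `x ≥ 0` satisfies `Ax = β(P)`, then the measure
on response types with `Q{R = r} = x(r)`, coupled independently with the marginal of
`Z` under `P`, is a probability measure with `Q{R ∈ 𝓡} = 1`, `P = QT⁻¹`, and
`E_Q[(g(R) − θ₀)1{R ∈ R'}] = 0`. -/
theorem lemma1_converse
    {𝒴 𝒟 𝒵 : Type*} [Fintype 𝒴] [Fintype 𝒟] [Fintype 𝒵]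
    [DecidableEq 𝒴] [DecidableEq 𝒟] [DecidableEq 𝒵] [Nonempty 𝒵]
    (p : 𝒴 × 𝒟 × 𝒵 → ℝ) (hp : ∀ m, 0 ≤ p m) (hpsum : ∑ m, p m = 1)
    (hz : ∀ z : 𝒵, 0 < ∑ y, ∑ d, p (y, d, z))
    (𝓡 R' : Finset ((𝒟 → 𝒴) × (𝒵 → 𝒟)))
    (g : ((𝒟 → 𝒴) × (𝒵 → 𝒟)) → ℝ) (θ₀ : ℝ)
    (x : ((𝒟 → 𝒴) × (𝒵 → 𝒟)) → ℝ) (hx : ∀ r, 0 ≤ x r)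
    -- the (y,d,z) rows of Ax = β(P)
    (hobs : ∀ (y : 𝒴) (d : 𝒟) (z : 𝒵),
      (∑ r : (𝒟 → 𝒴) × (𝒵 → 𝒟), if r.1 d = y ∧ r.2 z = d then x r else 0)
        = p (y, d, z) / (∑ y', ∑ d', p (y', d', z)))
    -- the 1{r ∈ 𝓡} row of Ax = β(P)
    (h𝓡 : (∑ r : (𝒟 → 𝒴) × (𝒵 → 𝒟), if r ∈ 𝓡 then x r else 0) = 1)
    -- the (g(r) − θ₀)1{r ∈ R'} row of Ax = β(P)
    (hmom : (∑ r : (𝒟 → 𝒴) × (𝒵 → 𝒟), if r ∈ R' then (g r - θ₀) * x r else 0) = 0) :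
    -- Q defined by q(r, z) = x(r) · P{Z = z} is a probability measure
    (∑ ω : ((𝒟 → 𝒴) × (𝒵 → 𝒟)) × 𝒵, x ω.1 * (∑ y, ∑ d, p (y, d, ω.2))) = 1 ∧
    -- Q{R ∈ 𝓡} = 1
    (∑ r : (𝒟 → 𝒴) × (𝒵 → 𝒟),
        if r ∈ 𝓡 then (∑ z, x r * (∑ y, ∑ d, p (y, d, z))) else 0) = 1 ∧
    -- P = QT⁻¹
    (∀ (y : 𝒴) (d : 𝒟) (z : 𝒵),
      (∑ r : (𝒟 → 𝒴) × (𝒵 → 𝒟),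
          if r.1 (r.2 z) = y ∧ r.2 z = d
          then x r * (∑ y', ∑ d', p (y', d', z)) else 0) = p (y, d, z)) ∧
    -- E_Q[(g(R) − θ₀) 1{R ∈ R'}] = 0
    (∑ r : (𝒟 → 𝒴) × (𝒵 → 𝒟),
        if r ∈ R' then (g r - θ₀) * (∑ z, x r * (∑ y, ∑ d, p (y, d, z))) else 0)
      = 0 :=
  lemma1_converse_general p hpsum hz 𝓡 R' g θ₀ x hobs h𝓡 hmom
end

section
/- In the one-sided-noncompliance setting above, the system of equations p_{1|1} = π_{012} + π_{010}, p_{0|1} = π_{002} + π_{000}, p_{2|2} = π_{002} + π_{012}, p_{0|2} = π_{000} + π_{010}, Σ π = 1, with all π's in [0,1], implies the bounds max{0, p_{1|1} − p_{0|2}} ≤ π_{012} ≤ min{p_{1|1}, p_{2|2}}, and conversely every value of π_{012} in this interval is attained by some nonnegative solution (π_{000}, π_{010}, π_{002}, π_{012}) of the system. -/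
/-- Cheng–Small first-step bound: the system `p_{1|1} = π_{012} + π_{010}`,
`p_{0|1} = π_{002} + π_{000}`, `p_{2|2} = π_{002} + π_{012}`,
`p_{0|2} = π_{000} + π_{010}`, `Σπ = 1`, with all `π`'s in `[0,1]`, implies
`max{0, p_{1|1} − p_{0|2}} ≤ π_{012} ≤ min{p_{1|1}, p_{2|2}}`; conversely every
value in this interval is attained by some nonnegative solution. -/
theorem cheng_small_first_step_bound
    (p01 p11 p02 p22 : ℝ)
    (h01 : 0 ≤ p01) (h11 : 0 ≤ p11) (h02 : 0 ≤ p02) (h22 : 0 ≤ p22)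
    (hz1 : p01 + p11 = 1) (hz2 : p02 + p22 = 1) :
    (∀ π000 π010 π002 π012 : ℝ,
      0 ≤ π000 → 0 ≤ π010 → 0 ≤ π002 → 0 ≤ π012 →
      π000 ≤ 1 → π010 ≤ 1 → π002 ≤ 1 → π012 ≤ 1 →
      p11 = π012 + π010 → p01 = π002 + π000 →
      p22 = π002 + π012 → p02 = π000 + π010 →
      π012 + π010 + π002 + π000 = 1 →
      max 0 (p11 - p02) ≤ π012 ∧ π012 ≤ min p11 p22) ∧
    (∀ t : ℝ, max 0 (p11 - p02) ≤ t → t ≤ min p11 p22 →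
      ∃ π000 π010 π002 π012 : ℝ,
        0 ≤ π000 ∧ 0 ≤ π010 ∧ 0 ≤ π002 ∧ 0 ≤ π012 ∧
        π000 ≤ 1 ∧ π010 ≤ 1 ∧ π002 ≤ 1 ∧ π012 ≤ 1 ∧
        p11 = π012 + π010 ∧ p01 = π002 + π000 ∧
        p22 = π002 + π012 ∧ p02 = π000 + π010 ∧
        π012 + π010 + π002 + π000 = 1 ∧ π012 = t) := by
  constructor
  · intro a b c d ha hb hc hd _ _ _ _ e1 e2 e3 e4 _
    constructor
    · apply max_le hd; linarith
    · apply le_min <;> linarith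
  · intro t h1 h2
    have ht0 : 0 ≤ t := le_trans (le_max_left _ _) h1
    have ht1 : p11 - p02 ≤ t := le_trans (le_max_right _ _) h1
    have ht11 : t ≤ p11 := le_trans h2 (min_le_left _ _)
    have ht22 : t ≤ p22 := le_trans h2 (min_le_right _ _)
    refine ⟨p02 - p11 + t, p11 - t, p22 - t, t, by linarith, by linarith,
      by linarith, ht0, by linarith, by linarith, by linarith, by linarith,
      by ring, by linarith, by ring, by ring, by linarith, rfl⟩
end

section
/- Closure upper bound for the null parameter set: if P₀ = {P : θ₀ ∈ Θ₀(P)} is nonempty, then cl(P₀) = {P : A x = β(P) for some x ≥ 0}, where Θ₀(P) = {θ(Q) : Q rationalizes P, Q{R ∈ R'} > 0}; in particular, for each P̃ with A x = β(P̃) solvable in x ≥ 0, the convex combinations P_n = λ_n P + (1 − λ_n) P̃ with λ_n ↓ 0, λ_n > 0, and P ∈ P₀ all lie in P₀ and converge to P̃. -/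
/-- A conditional probability system: `p(y,d,z)` is nonnegative and, for each `z`,
`(p(y,d,z))_{y,d}` is a probability vector (the conditional distribution of `(Y,D)`
given `Z = z`). -/
def CondPmf {𝒴 𝒟 𝒵 : Type} [Fintype 𝒴] [Fintype 𝒟]
    (p : 𝒴 × 𝒟 × 𝒵 → ℝ) : Prop :=
  (∀ m, 0 ≤ p m) ∧ ∀ z : 𝒵, (∑ y, ∑ d, p (y, d, z)) = 1

/-- `Q` (identified with the distribution `x` of the response type, with `Z` exogenous)
rationalizes `P` (identified with its conditional probabilities `p`): `x` is a
probability vector supported on `𝓡` whose induced observed conditional probabilities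
are `p`. -/
def Rationalizes {𝒴 𝒟 𝒵 : Type} [Fintype 𝒴] [Fintype 𝒟] [Fintype 𝒵]
    [DecidableEq 𝒴] [DecidableEq 𝒟] [DecidableEq 𝒵]
    (𝓡 : Finset ((𝒟 → 𝒴) × (𝒵 → 𝒟)))
    (x : ((𝒟 → 𝒴) × (𝒵 → 𝒟)) → ℝ) (p : 𝒴 × 𝒟 × 𝒵 → ℝ) : Prop :=
  (∀ r, 0 ≤ x r) ∧ (∑ r, x r) = 1 ∧ (∀ r ∉ 𝓡, x r = 0) ∧
    ∀ (y : 𝒴) (d : 𝒟) (z : 𝒵),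
      (∑ r : (𝒟 → 𝒴) × (𝒵 → 𝒟), if r.1 d = y ∧ r.2 z = d then x r else 0)
        = p (y, d, z)

/-- The null parameter set `P₀ = {P : θ₀ ∈ Θ₀(P)}`, where
`Θ₀(P) = {θ(Q) : Q rationalizes P, Q{R ∈ R'} > 0}` and `θ(Q) = E_Q[g(R) | R ∈ R']`. -/
def P0set {𝒴 𝒟 𝒵 : Type} [Fintype 𝒴] [Fintype 𝒟] [Fintype 𝒵]
    [DecidableEq 𝒴] [DecidableEq 𝒟] [DecidableEq 𝒵]
    (𝓡 R' : Finset ((𝒟 → 𝒴) × (𝒵 → 𝒟)))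
    (g : ((𝒟 → 𝒴) × (𝒵 → 𝒟)) → ℝ) (θ₀ : ℝ) : Set (𝒴 × 𝒟 × 𝒵 → ℝ) :=
  {p | CondPmf p ∧ ∃ x, Rationalizes 𝓡 x p ∧ 0 < (∑ r ∈ R', x r) ∧
        (∑ r ∈ R', g r * x r) / (∑ r ∈ R', x r) = θ₀}

/-- The set `{P : Ax = β(P) for some x ≥ 0}`, with `A` and `β` as in Lemma 1. -/
def PtildeSet {𝒴 𝒟 𝒵 : Type} [Fintype 𝒴] [Fintype 𝒟] [Fintype 𝒵]
    [DecidableEq 𝒴] [DecidableEq 𝒟] [DecidableEq 𝒵]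
    (𝓡 R' : Finset ((𝒟 → 𝒴) × (𝒵 → 𝒟)))
    (g : ((𝒟 → 𝒴) × (𝒵 → 𝒟)) → ℝ) (θ₀ : ℝ) : Set (𝒴 × 𝒟 × 𝒵 → ℝ) :=
  {p | CondPmf p ∧ ∃ x : ((𝒟 → 𝒴) × (𝒵 → 𝒟)) → ℝ, (∀ r, 0 ≤ x r) ∧
        (∀ (y : 𝒴) (d : 𝒟) (z : 𝒵),
          (∑ r : (𝒟 → 𝒴) × (𝒵 → 𝒟), if r.1 d = y ∧ r.2 z = d then x r else 0)
            = p (y, d, z)) ∧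
        (∑ r ∈ 𝓡, x r) = 1 ∧ (∑ r ∈ R', (g r - θ₀) * x r) = 0}

/-!
Every `P` in either set is the image `A x` of a distribution `x` of response types supported
on `𝓡` satisfying the moment condition `∑_{r ∈ R'} (g r - θ₀) x r = 0`; membership in `P₀`
additionally asks for `∑_{r ∈ R'} x r > 0`. Since `A` is linear, the conditions are convex and
the positivity condition survives mixing with any `P̃` of the right-hand set as long as the
weight on `P ∈ P₀` is positive; letting that weight tend to `0` shows that `P̃ ∈ cl(P₀)`.
Conversely the right-hand set is closed, being the intersection of a closed set with the
continuous image of a compact polytope of distributions.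
-/

open Filter Topology Finset Matrix

lemma div_sum_eq_iff_sum_sub_mul_eq_zero {ι : Type*} {s : Finset ι} {g x : ι → ℝ} {θ : ℝ}
    (hs : 0 < ∑ r ∈ s, x r) :
    (∑ r ∈ s, g r * x r) / (∑ r ∈ s, x r) = θ ↔ ∑ r ∈ s, (g r - θ) * x r = 0 := by
  simp only [sub_mul, sum_sub_distrib, ← mul_sum, div_eq_iff hs.ne', sub_eq_zero]

lemma tendsto_smul_add_one_sub_smul {E : Type*} [AddCommGroup E] [Module ℝ E]
    [TopologicalSpace E] [IsTopologicalAddGroup E] [ContinuousSMul ℝ E] {lam : ℕ → ℝ}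
    (hlam : Tendsto lam atTop (𝓝 0)) (p q : E) :
    Tendsto (fun n => lam n • p + (1 - lam n) • q) atTop (𝓝 q) := by
  have hcont : Continuous fun c : ℝ => c • p + (1 - c) • q := by fun_prop
  simpa [Function.comp_def] using (hcont.tendsto 0).comp hlam

section ResponseTypes

variable {ι : Type*} [Fintype ι]

lemma sum_eq_one_iff_of_mem_stdSimplex [DecidableEq ι] {x : ι → ℝ} (hx : x ∈ stdSimplex ℝ ι)
    (s : Finset ι) : ∑ r ∈ s, x r = 1 ↔ ∀ r ∉ s, x r = 0 := by
  have hsplit := sum_compl_add_sum s x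
  have hcompl : ∑ r ∈ sᶜ, x r = 0 ↔ ∀ r ∉ s, x r = 0 := by
    simpa using sum_eq_zero_iff_of_nonneg (s := sᶜ) fun r _ => hx.1 r
  rw [hx.2] at hsplit
  constructor
  · intro h
    exact hcompl.1 (by linarith)
  · intro h
    linarith [hcompl.2 h]

def nullFeasible (𝓡 R' : Finset ι) (g : ι → ℝ) (θ₀ : ℝ) : Set (ι → ℝ) :=
  {x | x ∈ stdSimplex ℝ ι ∧ ∑ r ∈ 𝓡, x r = 1 ∧ ∑ r ∈ R', (g r - θ₀) * x r = 0}

lemma convex_nullFeasible (𝓡 R' : Finset ι) (g : ι → ℝ) (θ₀ : ℝ) :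
    Convex ℝ (nullFeasible 𝓡 R' g θ₀) := by
  rintro x ⟨hx, hx𝓡, hxR'⟩ y ⟨hy, hy𝓡, hyR'⟩ a b ha hb hab
  refine ⟨convex_stdSimplex ℝ ι hx hy ha hb hab, ?_, ?_⟩
  · simp only [Pi.add_apply, Pi.smul_apply, smul_eq_mul, sum_add_distrib, ← mul_sum, hx𝓡, hy𝓡]
    linarith
  · simp only [Pi.add_apply, Pi.smul_apply, smul_eq_mul, mul_add, sum_add_distrib,
      mul_left_comm _ a, mul_left_comm _ b, ← mul_sum, hxR', hyR', mul_zero, add_zero]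

lemma isCompact_nullFeasible (𝓡 R' : Finset ι) (g : ι → ℝ) (θ₀ : ℝ) :
    IsCompact (nullFeasible 𝓡 R' g θ₀) :=
  (isCompact_stdSimplex ℝ ι).inter_right
    ((isClosed_eq (by fun_prop) (by fun_prop)).inter (isClosed_eq (by fun_prop) (by fun_prop)))

end ResponseTypes

section CondPmf

variable {𝒴 𝒟 𝒵 : Type} [Fintype 𝒴] [Fintype 𝒟]

lemma convex_setOf_condPmf : Convex ℝ {p : 𝒴 × 𝒟 × 𝒵 → ℝ | CondPmf p} := by
  rintro p ⟨hp0, hp1⟩ q ⟨hq0, hq1⟩ a b ha hb hab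
  refine ⟨fun m => add_nonneg (mul_nonneg ha (hp0 m)) (mul_nonneg hb (hq0 m)), fun z => ?_⟩
  simp only [Pi.add_apply, Pi.smul_apply, smul_eq_mul, sum_add_distrib, ← mul_sum, hp1, hq1]
  linarith

lemma isClosed_setOf_condPmf : IsClosed {p : 𝒴 × 𝒟 × 𝒵 → ℝ | CondPmf p} := by
  simp only [CondPmf, Set.ofPred_and, Set.ofPred_forall]
  exact (isClosed_iInter fun m => isClosed_le continuous_const (continuous_apply m)).inter
    (isClosed_iInter fun z => isClosed_eq (by fun_prop) continuous_const)

end CondPmf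

section Observables

variable {𝒴 𝒟 𝒵 : Type} [Fintype 𝒴] [Fintype 𝒟] [Fintype 𝒵]
  [DecidableEq 𝒴] [DecidableEq 𝒟] [DecidableEq 𝒵]

/-- The matrix sending a distribution of response types `r = (y(·), d(·))` to the conditional
probabilities of `(Y, D) = (y(d(z)), d(z))` given `Z = z`. -/
def observationMatrix (𝒴 𝒟 𝒵 : Type) [DecidableEq 𝒴] [DecidableEq 𝒟] :
    Matrix (𝒴 × 𝒟 × 𝒵) ((𝒟 → 𝒴) × (𝒵 → 𝒟)) ℝ :=
  Matrix.of fun m r => if r.1 m.2.1 = m.1 ∧ r.2 m.2.2 = m.2.1 then 1 else 0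

lemma observationMatrix_mulVec_apply (x : (𝒟 → 𝒴) × (𝒵 → 𝒟) → ℝ) (y : 𝒴) (d : 𝒟) (z : 𝒵) :
    (observationMatrix 𝒴 𝒟 𝒵 *ᵥ x) (y, d, z) =
      ∑ r : (𝒟 → 𝒴) × (𝒵 → 𝒟), if r.1 d = y ∧ r.2 z = d then x r else 0 := by
  simp [observationMatrix, mulVec, dotProduct]

lemma observationMatrix_mulVec_eq_iff (x : (𝒟 → 𝒴) × (𝒵 → 𝒟) → ℝ) (p : 𝒴 × 𝒟 × 𝒵 → ℝ) :
    observationMatrix 𝒴 𝒟 𝒵 *ᵥ x = p ↔ ∀ y d z,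
      (∑ r : (𝒟 → 𝒴) × (𝒵 → 𝒟), if r.1 d = y ∧ r.2 z = d then x r else 0) = p (y, d, z) := by
  simp only [funext_iff, Prod.forall, observationMatrix_mulVec_apply]

lemma sum_observationMatrix_mulVec (x : (𝒟 → 𝒴) × (𝒵 → 𝒟) → ℝ) (z : 𝒵) :
    ∑ y, ∑ d, (observationMatrix 𝒴 𝒟 𝒵 *ᵥ x) (y, d, z) = ∑ r, x r := by
  simp only [observationMatrix_mulVec_apply]
  rw [sum_comm]
  simp_rw [sum_comm (s := (univ : Finset 𝒴)), sum_comm (s := (univ : Finset 𝒟))]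
  refine sum_congr rfl fun r _ => ?_
  rw [sum_comm]
  simp [ite_and]

lemma sum_eq_one_of_observationMatrix_mulVec_eq [Nonempty 𝒵] {x : (𝒟 → 𝒴) × (𝒵 → 𝒟) → ℝ}
    {p : 𝒴 × 𝒟 × 𝒵 → ℝ} (hp : CondPmf p) (hx : observationMatrix 𝒴 𝒟 𝒵 *ᵥ x = p) :
    ∑ r, x r = 1 := by
  obtain ⟨z⟩ := ‹Nonempty 𝒵›
  rw [← sum_observationMatrix_mulVec x z, hx, hp.2 z]

lemma rationalizes_iff (𝓡 : Finset ((𝒟 → 𝒴) × (𝒵 → 𝒟))) (x : (𝒟 → 𝒴) × (𝒵 → 𝒟) → ℝ)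
    (p : 𝒴 × 𝒟 × 𝒵 → ℝ) :
    Rationalizes 𝓡 x p ↔
      x ∈ stdSimplex ℝ _ ∧ ∑ r ∈ 𝓡, x r = 1 ∧ observationMatrix 𝒴 𝒟 𝒵 *ᵥ x = p := by
  rw [observationMatrix_mulVec_eq_iff]
  constructor
  · rintro ⟨hx0, hx1, hsupp, hobs⟩
    exact ⟨⟨hx0, hx1⟩, (sum_eq_one_iff_of_mem_stdSimplex ⟨hx0, hx1⟩ 𝓡).2 hsupp, hobs⟩
  · rintro ⟨hx, hx𝓡, hobs⟩
    exact ⟨hx.1, hx.2, (sum_eq_one_iff_of_mem_stdSimplex hx 𝓡).1 hx𝓡, hobs⟩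

variable (𝓡 R' : Finset ((𝒟 → 𝒴) × (𝒵 → 𝒟))) (g : ((𝒟 → 𝒴) × (𝒵 → 𝒟)) → ℝ) (θ₀ : ℝ)

lemma mem_P0set_iff (p : 𝒴 × 𝒟 × 𝒵 → ℝ) :
    p ∈ P0set 𝓡 R' g θ₀ ↔ CondPmf p ∧ ∃ x ∈ nullFeasible 𝓡 R' g θ₀,
      observationMatrix 𝒴 𝒟 𝒵 *ᵥ x = p ∧ 0 < ∑ r ∈ R', x r := by
  simp only [P0set, Set.mem_ofPred_eq, rationalizes_iff, nullFeasible]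
  refine and_congr_right fun _ => exists_congr fun x => ?_
  constructor
  · rintro ⟨⟨hx, hx𝓡, hobs⟩, hpos, hθ⟩
    exact ⟨⟨hx, hx𝓡, (div_sum_eq_iff_sum_sub_mul_eq_zero hpos).1 hθ⟩, hobs, hpos⟩
  · rintro ⟨⟨hx, hx𝓡, hmom⟩, hobs, hpos⟩
    exact ⟨⟨hx, hx𝓡, hobs⟩, hpos, (div_sum_eq_iff_sum_sub_mul_eq_zero hpos).2 hmom⟩

lemma PtildeSet_eq [Nonempty 𝒵] :
    PtildeSet 𝓡 R' g θ₀ =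
      {p | CondPmf p} ∩ (observationMatrix 𝒴 𝒟 𝒵 *ᵥ ·) '' nullFeasible 𝓡 R' g θ₀ := by
  ext p
  simp only [PtildeSet, nullFeasible, Set.mem_inter_iff, Set.mem_ofPred_eq, Set.mem_image,
    ← observationMatrix_mulVec_eq_iff]
  refine and_congr_right fun hp => exists_congr fun x => ?_
  constructor
  · rintro ⟨hx0, hobs, hx𝓡, hmom⟩
    exact ⟨⟨⟨hx0, sum_eq_one_of_observationMatrix_mulVec_eq hp hobs⟩, hx𝓡, hmom⟩, hobs⟩
  · rintro ⟨⟨hx, hx𝓡, hmom⟩, hobs⟩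
    exact ⟨hx.1, hobs, hx𝓡, hmom⟩

lemma isClosed_PtildeSet [Nonempty 𝒵] : IsClosed (PtildeSet 𝓡 R' g θ₀) := by
  rw [PtildeSet_eq]
  exact isClosed_setOf_condPmf.inter
    ((isCompact_nullFeasible 𝓡 R' g θ₀).image (by fun_prop)).isClosed

lemma P0set_subset_PtildeSet [Nonempty 𝒵] : P0set 𝓡 R' g θ₀ ⊆ PtildeSet 𝓡 R' g θ₀ := by
  rintro p hp
  obtain ⟨hcond, x, hx, hobs, -⟩ := (mem_P0set_iff 𝓡 R' g θ₀ p).1 hp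
  rw [PtildeSet_eq]
  exact ⟨hcond, x, hx, hobs⟩

lemma smul_add_one_sub_smul_mem_P0set [Nonempty 𝒵] {p q : 𝒴 × 𝒟 × 𝒵 → ℝ}
    (hp : p ∈ P0set 𝓡 R' g θ₀) (hq : q ∈ PtildeSet 𝓡 R' g θ₀) {a : ℝ} (ha₀ : 0 < a)
    (ha₁ : a ≤ 1) : a • p + (1 - a) • q ∈ P0set 𝓡 R' g θ₀ := by
  obtain ⟨hpc, x, hx, rfl, hxpos⟩ := (mem_P0set_iff 𝓡 R' g θ₀ p).1 hp
  rw [PtildeSet_eq] at hq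
  obtain ⟨hqc, y, hy, rfl⟩ := hq
  have hb : 0 ≤ 1 - a := sub_nonneg.2 ha₁
  refine (mem_P0set_iff 𝓡 R' g θ₀ _).2 ⟨convex_setOf_condPmf hpc hqc ha₀.le hb (by ring),
    a • x + (1 - a) • y, convex_nullFeasible 𝓡 R' g θ₀ hx hy ha₀.le hb (by ring), ?_, ?_⟩
  · rw [mulVec_add, mulVec_smul, mulVec_smul]
  · simp only [Pi.add_apply, Pi.smul_apply, smul_eq_mul, sum_add_distrib, ← mul_sum]
    have hy₀ : 0 ≤ ∑ r ∈ R', y r := sum_nonneg fun r _ => hy.1.1 r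
    positivity

end Observables

/-- Closure characterization of the null parameter set: if `P₀` is nonempty, then
`cl(P₀) = {P : Ax = β(P) for some x ≥ 0}`; in particular, the convex combinations
`P_n = λ_n P + (1 − λ_n)P̃` with `λ_n ↓ 0`, `λ_n > 0`, `P ∈ P₀` and `P̃` in the
right-hand set all lie in `P₀` and converge to `P̃`. -/
theorem closure_P0_eq_Ptilde
    {𝒴 𝒟 𝒵 : Type} [Fintype 𝒴] [Fintype 𝒟] [Fintype 𝒵]
    [DecidableEq 𝒴] [DecidableEq 𝒟] [DecidableEq 𝒵] [Nonempty 𝒵]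
    (𝓡 R' : Finset ((𝒟 → 𝒴) × (𝒵 → 𝒟)))
    (g : ((𝒟 → 𝒴) × (𝒵 → 𝒟)) → ℝ) (θ₀ : ℝ)
    (hne : (P0set 𝓡 R' g θ₀).Nonempty) :
    closure (P0set 𝓡 R' g θ₀) = PtildeSet 𝓡 R' g θ₀ ∧
    ∀ p ∈ P0set 𝓡 R' g θ₀, ∀ pt ∈ PtildeSet 𝓡 R' g θ₀,
      ∀ lam : ℕ → ℝ, (∀ n, 0 < lam n) → (∀ n, lam n ≤ 1) → Antitone lam →
        Filter.Tendsto lam Filter.atTop (nhds 0) →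
        (∀ n, (lam n • p + (1 - lam n) • pt) ∈ P0set 𝓡 R' g θ₀) ∧
        Filter.Tendsto (fun n => lam n • p + (1 - lam n) • pt)
          Filter.atTop (nhds pt) := by
  refine ⟨(closure_minimal (P0set_subset_PtildeSet 𝓡 R' g θ₀)
    (isClosed_PtildeSet 𝓡 R' g θ₀)).antisymm fun pt hpt => ?_,
    fun p hp pt hpt lam hpos hle _ hlim =>
      ⟨fun n => smul_add_one_sub_smul_mem_P0set 𝓡 R' g θ₀ hp hpt (hpos n) (hle n),
         tendsto_smul_add_one_sub_smul hlim p pt⟩⟩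
  obtain ⟨p, hp⟩ := hne
  have hinv_pos (n : ℕ) : (0 : ℝ) < 1 / (n + 1) := by positivity
  have hinv_le (n : ℕ) : (1 : ℝ) / (n + 1) ≤ 1 :=
    div_le_one_of_le₀ (by linarith [n.cast_nonneg (α := ℝ)]) (by positivity)
  exact mem_closure_of_tendsto
    (tendsto_smul_add_one_sub_smul tendsto_one_div_add_atTop_nhds_zero_nat p pt)
    (Eventually.of_forall fun n =>
      smul_add_one_sub_smul_mem_P0set 𝓡 R' g θ₀ hp hpt (hinv_pos n) (hinv_le n))
end
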